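/- arXiv:math/0112114 — 2 statements merged into one kernel-verified Lean document; each statement's English description precedes it below -/
import Mathlib

section
/- Let (M,J,g,∇) be a special Kähler manifold and define the connection ∇^J by ∇^J_X Y := -J∇_X(JY) = ∇_X Y - J(∇_X J)Y. Then ∇^J equals the g-conjugate connection of ∇, i.e., X g(Y,Z) = g(∇_X Y, Z) + g(Y, ∇^J_X Z) for all vector fields X,Y,Z. -/
/-- Special Kähler geometry in the algebraic calculus of vector fields:
`R` is the ring of smooth functions, `X` the `R`-module of vector fields,
`act` the action of vector fields on functions, `bracket` the Lie bracket,
`g` the (pseudo-)Kähler metric, `J` the complex structure, `D` the Levi-Civita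
connection and `nab` the flat special connection `∇`.

Statement: on a special Kähler manifold `(M,J,g,∇)`, the connection
`∇^J_a c := -J ∇_a (J c)` is the `g`-conjugate connection of `∇`, i.e.
`a g(b,c) = g(∇_a b, c) + g(b, ∇^J_a c)`. -/
theorem stmt4 {R : Type*} [CommRing R] {X : Type*} [AddCommGroup X] [Module R X]
    (act : X → R → R) (bracket : X → X → X)
    (g : X → X → R) (J : X → X) (D : X → X → X) (nab : X → X → X)
    -- Kähler structure
    (hJ2 : ∀ b, J (J b) = -b)
    (hgsymm : ∀ b c, g b c = g c b)
    (hnd : ∀ b, (∀ c, g b c = 0) → b = 0)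
    (hJorth : ∀ b c, g (J b) (J c) = g b c)
    -- Levi-Civita connection: metric, torsionfree, and `DJ = 0`
    (hDg : ∀ a b c, act a (g b c) = g (D a b) c + g b (D a c))
    (hDtf : ∀ a b, D a b - D b a = bracket a b)
    (hDJ : ∀ a b, D a (J b) = J (D a b))
    -- special connection `∇`: flat, torsionfree, `∇ω = 0`, `∇J` symmetric
    (htf : ∀ a b, nab a b - nab b a = bracket a b)
    (hflat : ∀ a b c, nab a (nab b c) - nab b (nab a c) - nab (bracket a b) c = 0)
    (hnabom : ∀ a b c, act a (g b (J c)) = g (nab a b) (J c) + g b (J (nab a c)))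
    (hJsym : ∀ a b, nab a (J b) - J (nab a b) = nab b (J a) - J (nab b a)) :
    ∀ a b c, act a (g b c) = g (nab a b) c + g b (-(J (nab a (J c)))) := by
  intro a b c
  have hJneg : ∀ x, J (-(J x)) = x := by
    intro x
    have h1 : -(J x) = J (J (J x)) := (hJ2 (J x)).symm
    rw [h1, hJ2 (J (J x)), hJ2 x, neg_neg]
  have key : g b (-(J (nab a (J c)))) = g (J b) (nab a (J c)) := by
    rw [← hJorth b (-(J (nab a (J c)))), hJneg]
  have h2 := hnabom a (J c) b
  have h3 : g (J c) (J b) = g b c := by rw [hJorth, hgsymm]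
  have h4 : g (J c) (J (nab a b)) = g (nab a b) c := by rw [hJorth, hgsymm]
  rw [key, hgsymm (J b) (nab a (J c))]
  rw [h3, h4] at h2
  linear_combination h2
end

section
/- Let F be holomorphic on U ⊂ ℂ^n and φ = dF : U → ℂ^{2n} as above. Then φ is Kählerian (i.e., the pullback φ*γ of the Hermitian form γ = i·Ω(·,τ·) is nondegenerate) if and only if det(Im ∂²F) ≠ 0, where ∂²F = (∂²F/∂z^i∂z^j) is the holomorphic Hessian matrix of F. -/
noncomputable section

/-- `V = ℂ^{2n} = T*ℂ^n` with coordinates `(z, w)`. -/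
abbrev Vsp (n : ℕ) := (Fin n → ℂ) × (Fin n → ℂ)

/-- The canonical complex symplectic form `Ω = Σ dz^i ∧ dw_i`. -/
def Omg (n : ℕ) (u v : Vsp n) : ℂ := ∑ i, (u.1 i * v.2 i - u.2 i * v.1 i)

/-- Complex conjugation with respect to the real form `ℝ^{2n}`. -/
def tauC (n : ℕ) (v : Vsp n) : Vsp n :=
  (fun i => starRingEnd ℂ (v.1 i), fun i => starRingEnd ℂ (v.2 i))

/-- The Hermitian form `γ(u,v) = i·Ω(u, τ v)`. -/
def gammaH (n : ℕ) (u v : Vsp n) : ℂ := Complex.I * Omg n u (tauC n v)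

/-- The differential `dφ_z` of `φ = dF` applied to a tangent vector `a ∈ ℂ^n`. -/
def dphiF (n : ℕ) (F : (Fin n → ℂ) → ℂ) (z : Fin n → ℂ) (a : Fin n → ℂ) : Vsp n :=
  (a, fun i => fderiv ℂ (fun w => fderiv ℂ F w (Pi.single i 1)) z a)

/-- The holomorphic Hessian matrix `∂²F = (∂²F/∂z^i∂z^j)` of `F` at `z`. -/
def hessF (n : ℕ) (F : (Fin n → ℂ) → ℂ) (z : Fin n → ℂ) : Matrix (Fin n) (Fin n) ℂ :=
  fun i j => fderiv ℂ (fun w => fderiv ℂ F w (Pi.single j 1)) z (Pi.single i 1)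

/-!
Along a complex line, `t ↦ F (x + t • v)` is holomorphic, so Cauchy's formula writes `∂ᵥF(x)` as a
circle integral of `F` whose integrand is holomorphic in `x`, with derivative bounded by the Cauchy
estimate. Differentiating under the integral shows that `dF` is complex differentiable, so the
holomorphic Hessian `H` is symmetric. Then `dφ a = (a, aᵀH)` and, since `i (H̄ - H) = 2 Im H` for
symmetric `H`, `γ(dφ a, dφ b) = 2 aᵀ (Im H) b̄`; this form is nondegenerate exactly when
`det (Im H) ≠ 0`.
-/

open Metric Complex Filter Topology Real Matrix Module

theorem differentiableAt_clm_of_forall_apply {𝕜 D E F : Type*} [NontriviallyNormedField 𝕜]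
    [CompleteSpace 𝕜] [NormedAddCommGroup D] [NormedSpace 𝕜 D] [NormedAddCommGroup E]
    [NormedSpace 𝕜 E] [FiniteDimensional 𝕜 E] [NormedAddCommGroup F] [NormedSpace 𝕜 F]
    {g : D → E →L[𝕜] F} {x : D} (h : ∀ v, DifferentiableAt 𝕜 (fun y => g y v) x) :
    DifferentiableAt 𝕜 g x := by
  let d := finrank 𝕜 E
  have hd : d = finrank 𝕜 (Fin d → 𝕜) := (finrank_fin_fun 𝕜).symm
  let e := ((ContinuousLinearEquiv.ofFinrankEq hd).arrowCongr (1 : F ≃L[𝕜] F)).trans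
    (ContinuousLinearEquiv.piRing (Fin d))
  have hg : g = e.symm ∘ (e ∘ g) := by ext; simp
  rw [hg]
  exact e.symm.differentiableAt.comp x (differentiableAt_pi.2 fun i => h _)

theorem exists_ball_subset_forall_norm_le {X G : Type*} [PseudoMetricSpace X]
    [SeminormedAddCommGroup G] {f : X → G} {U : Set X} {z : X} (hU : U ∈ 𝓝 z)
    (hf : ContinuousAt f z) : ∃ δ > 0, ball z δ ⊆ U ∧ ∀ y ∈ ball z δ, ‖f y‖ ≤ ‖f z‖ + 1 := by
  obtain ⟨δ, hδ, h⟩ := Metric.eventually_nhds_iff_ball.1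
    (inter_mem hU (hf.norm.eventually (gt_mem_nhds (lt_add_one ‖f z‖))))
  exact ⟨δ, hδ, fun y hy => (h y hy).1, fun y hy => (h y hy).2.le⟩

theorem add_smul_mem_ball {𝕜 E : Type*} [NormedField 𝕜] [SeminormedAddCommGroup E]
    [NormedSpace 𝕜 E] {z y v : E} {t : 𝕜} {ρ ε : ℝ} (hy : y ∈ ball z ρ) (ht : ‖t‖ * ‖v‖ ≤ ε) :
    y + t • v ∈ ball z (ρ + ε) := by
  rw [mem_ball, dist_eq_norm, add_sub_right_comm]
  calc ‖y - z + t • v‖ ≤ ‖y - z‖ + ‖t • v‖ := norm_add_le _ _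
    _ < ρ + ε := add_lt_add_of_lt_of_le (by rwa [← dist_eq_norm]) (by rwa [norm_smul])

section Holomorphic

variable {E G : Type*} [NormedAddCommGroup E] [NormedSpace ℂ E] [NormedAddCommGroup G]
  [NormedSpace ℂ G]

theorem norm_fderiv_le_of_forall_norm_le {f : E → G} {x : E} {R M : ℝ} (hR : 0 < R)
    (hf : DifferentiableOn ℂ f (ball x R)) (hM : ∀ y ∈ ball x R, ‖f y‖ ≤ M) :
    ‖fderiv ℂ f x‖ ≤ 2 * M / R :=
  norm_fderiv_le_div_of_mapsTo_ball hf (fun y hy => by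
    rw [mem_closedBall, dist_eq_norm, two_mul]
    exact (norm_sub_le _ _).trans (add_le_add (hM y hy) (hM x (mem_ball_self hR)))) hR

variable [CompleteSpace G]

theorem fderiv_apply_eq_circleIntegral {f : E → G} {x v : E} {r : ℝ} (hr : 0 < r)
    (hf : ∀ t ∈ closedBall (0 : ℂ) r, DifferentiableAt ℂ f (x + t • v)) :
    fderiv ℂ f x v = (2 * π * I)⁻¹ • ∮ t in C(0, r), (1 / t ^ 2) • f (x + t • v) := by
  have hline : DifferentiableOn ℂ (fun t : ℂ => f (x + t • v)) (closedBall 0 r) := fun t ht =>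
    ((hf t ht).comp t (by fun_prop)).differentiableWithinAt
  have hderiv : deriv (fun t : ℂ => f (x + t • v)) 0 = fderiv ℂ f x v := by
    have hx : HasFDerivAt f (fderiv ℂ f x) (x + (0 : ℂ) • v) := by
      simpa using (hf 0 (mem_closedBall_self hr.le)).hasFDerivAt
    have h := hx.comp_hasDerivAt (0 : ℂ) (((hasDerivAt_id 0).smul_const v).const_add x)
    rw [one_smul] at h
    exact h.deriv
  have hformula := hline.deriv_eq_smul_circleIntegral hr
  simp only [sub_zero] at hformula
  rw [hformula, hderiv, inv_smul_smul₀ two_pi_I_ne_zero]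

theorem differentiableAt_circleIntegral_smul_comp_add_smul [FiniteDimensional ℂ E]
    [SecondCountableTopology G] {f : E → G} {g : ℂ → ℂ} {z v : E} {r ρ C : ℝ} (hr : 0 ≤ r)
    (hρ : 0 < ρ) (hg : ContinuousOn g (sphere 0 r))
    (hf : ∀ y ∈ ball z ρ, ∀ t ∈ sphere (0 : ℂ) r, DifferentiableAt ℂ f (y + t • v))
    (hf' : ∀ y ∈ ball z ρ, ∀ t ∈ sphere (0 : ℂ) r, ‖fderiv ℂ f (y + t • v)‖ ≤ C) :
    DifferentiableAt ℂ (fun y => ∮ t in C(0, r), g t • f (y + t • v)) z := by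
  have hc : ∀ θ, circleMap 0 r θ ∈ sphere (0 : ℂ) r := circleMap_mem_sphere 0 hr
  set k : ℝ → ℂ := fun θ => deriv (circleMap 0 r) θ * g (circleMap 0 r θ)
  have hk : Continuous k := by
    simp only [k, deriv_circleMap]
    exact ((continuous_circleMap 0 r).mul continuous_const).mul
      (hg.comp_continuous (continuous_circleMap 0 r) hc)
  have hline : ∀ y ∈ ball z ρ, Continuous fun θ => f (y + circleMap 0 r θ • v) := fun y hy =>
    continuous_iff_continuousAt.2 fun θ =>
      ContinuousAt.comp (g := f) (hf y hy _ (hc θ)).continuousAt (by fun_prop)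
  have hint : HasFDerivAt (fun y => ∫ θ in (0)..2 * π, k θ • f (y + circleMap 0 r θ • v))
      (∫ θ in (0)..2 * π, k θ • fderiv ℂ f (z + circleMap 0 r θ • v)) z := by
    borelize E
    refine intervalIntegral.hasFDerivAt_integral_of_dominated_of_fderiv_le
      (F' := fun y θ => k θ • fderiv ℂ f (y + circleMap 0 r θ • v))
      (bound := fun θ => ‖k θ‖ * C) (ball_mem_nhds z hρ) ?_ ?_ ?_ ?_ ?_ ?_
    · filter_upwards [ball_mem_nhds z hρ] with y hy
      exact (hk.smul (hline y hy)).aestronglyMeasurable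
    · exact (hk.smul (hline z (mem_ball_self hρ))).intervalIntegrable _ _
    · have hpath : Continuous fun θ => z + circleMap 0 r θ • v := by fun_prop
      exact hk.aestronglyMeasurable.smul
        ((measurable_fderiv ℂ f).comp_aemeasurable hpath.aemeasurable).aestronglyMeasurable
    · refine Eventually.of_forall fun θ _ y hy => ?_
      rw [norm_smul]
      exact mul_le_mul_of_nonneg_left (hf' y hy _ (hc θ)) (norm_nonneg _)
    · exact (hk.norm.mul continuous_const).intervalIntegrable _ _
    · refine Eventually.of_forall fun θ _ y hy => ?_
      exact ((hasFDerivAt_comp_add_right _).2 (hf y hy _ (hc θ)).hasFDerivAt).const_smul (k θ)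
  simpa only [circleIntegral, smul_smul] using hint.differentiableAt

theorem DifferentiableOn.differentiableOn_fderiv_apply [FiniteDimensional ℂ E]
    [SecondCountableTopology G] {f : E → G} {U : Set E} (hU : IsOpen U)
    (hf : DifferentiableOn ℂ f U) (v : E) : DifferentiableOn ℂ (fun x => fderiv ℂ f x v) U := by
  intro z hz
  obtain ⟨δ, hδ, hball, hbound⟩ := exists_ball_subset_forall_norm_le (hU.mem_nhds hz)
    (hf.continuousOn.continuousAt (hU.mem_nhds hz))
  have hdiff : ∀ p ∈ ball z δ, DifferentiableAt ℂ f p := fun p hp =>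
    hf.differentiableAt (hU.mem_nhds (hball hp))
  set r := δ / (4 * (‖v‖ + 1)) with hr_def
  have hr : 0 < r := by positivity
  have hnear : ∀ y ∈ ball z (δ / 4), ∀ t ∈ closedBall (0 : ℂ) r, y + t • v ∈ ball z (δ / 2) := by
    intro y hy t ht
    refine ball_subset_ball (by linarith) (add_smul_mem_ball hy (ε := δ / 4) ?_)
    calc ‖t‖ * ‖v‖ ≤ r * (‖v‖ + 1) := by
          gcongr
          · simpa using ht
          · linarith
      _ = δ / 4 := by rw [hr_def]; field_simp
  have hcauchy : ∀ p ∈ ball z (δ / 2), ‖fderiv ℂ f p‖ ≤ 2 * (‖f z‖ + 1) / (δ / 2) := by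
    intro p hp
    have hsub : ball p (δ / 2) ⊆ ball z δ :=
      ball_subset_ball' (by rw [mem_ball] at hp; linarith)
    exact norm_fderiv_le_of_forall_norm_le (by positivity)
      (fun q hq => (hdiff q (hsub hq)).differentiableWithinAt) (fun q hq => hbound q (hsub hq))
  have hrep : (fun y => fderiv ℂ f y v) =ᶠ[𝓝 z]
      fun y => (2 * π * I)⁻¹ • ∮ t in C(0, r), (1 / t ^ 2) • f (y + t • v) := by
    filter_upwards [ball_mem_nhds z (by positivity : 0 < δ / 4)] with y hy
    exact fderiv_apply_eq_circleIntegral hr fun t ht =>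
      hdiff _ (ball_subset_ball (by linarith) (hnear y hy t ht))
  have hweight : ContinuousOn (fun t : ℂ => 1 / t ^ 2) (sphere 0 r) :=
    continuousOn_const.div (continuousOn_pow 2) fun t ht =>
      pow_ne_zero 2 (ne_of_mem_sphere ht hr.ne')
  have hsphere : ∀ y ∈ ball z (δ / 4), ∀ t ∈ sphere (0 : ℂ) r, y + t • v ∈ ball z (δ / 2) :=
    fun y hy t ht => hnear y hy t (sphere_subset_closedBall ht)
  have hint := differentiableAt_circleIntegral_smul_comp_add_smul hr.le (by positivity) hweight
    (fun y hy t ht => hdiff _ (ball_subset_ball (by linarith) (hsphere y hy t ht)))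
    (fun y hy t ht => hcauchy _ (hsphere y hy t ht))
  exact ((hint.const_smul _).congr_of_eventuallyEq hrep).differentiableWithinAt

theorem DifferentiableOn.fderiv_fderiv_apply_comm [FiniteDimensional ℂ E]
    [SecondCountableTopology G] {f : E → G} {U : Set E} (hU : IsOpen U)
    (hf : DifferentiableOn ℂ f U) {z : E} (hz : z ∈ U) (u v : E) :
    fderiv ℂ (fun w => fderiv ℂ f w u) z v = fderiv ℂ (fun w => fderiv ℂ f w v) z u := by
  have hdf : DifferentiableAt ℂ (fderiv ℂ f) z := differentiableAt_clm_of_forall_apply fun v =>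
    (hf.differentiableOn_fderiv_apply hU v).differentiableAt (hU.mem_nhds hz)
  have happly : ∀ u v, fderiv ℂ (fun w => fderiv ℂ f w u) z v = fderiv ℂ (fderiv ℂ f) z v u :=
    fun u v => by simp [fderiv_clm_apply hdf (differentiableAt_const u)]
  rw [happly, happly]
  refine second_derivative_symmetric_of_eventually (f := f) ?_ hdf.hasFDerivAt v u
  filter_upwards [hU.mem_nhds hz] with y hy
  exact (hf.differentiableAt (hU.mem_nhds hy)).hasFDerivAt

end Holomorphic

theorem I_mul_conj_sub_self (w : ℂ) : I * (starRingEnd ℂ w - w) = 2 * (w.im : ℂ) := by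
  rw [← neg_sub, sub_conj]
  push_cast
  linear_combination (-2 * (w.im : ℂ)) * I_sq

theorem gammaH_graph {n : ℕ} {A : Matrix (Fin n) (Fin n) ℂ} (hA : A.IsSymm) (a b : Fin n → ℂ) :
    gammaH n (a, a ᵥ* A) (b, b ᵥ* A) = 2 * (a ⬝ᵥ (A.map im).map ofReal *ᵥ star b) := by
  have hswap : ∑ i, (a ᵥ* A) i * starRingEnd ℂ (b i) =
      ∑ i, a i * ∑ j, A i j * starRingEnd ℂ (b j) := by
    simp only [vecMul, dotProduct, Finset.sum_mul, Finset.mul_sum]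
    rw [Finset.sum_comm]
    exact Finset.sum_congr rfl fun i _ => Finset.sum_congr rfl fun j _ => by ring
  simp only [gammaH, Omg, tauC, Finset.sum_sub_distrib, hswap]
  simp only [vecMul, mulVec, dotProduct, map_sum, map_mul, Finset.mul_sum,
    ← Finset.sum_sub_distrib, ← mul_sub, Matrix.map_apply, Pi.star_apply]
  refine Finset.sum_congr rfl fun i _ => Finset.sum_congr rfl fun j _ => ?_
  rw [hA.apply i j]
  simp only [star_def]
  linear_combination (a i * starRingEnd ℂ (b j)) * I_mul_conj_sub_self (A i j)

theorem dphiF_eq_vecMul (n : ℕ) (F : (Fin n → ℂ) → ℂ) (z a : Fin n → ℂ) :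
    dphiF n F z a = (a, a ᵥ* hessF n F z) := by
  refine Prod.ext rfl (funext fun i => ?_)
  simp only [dphiF, vecMul, dotProduct, hessF]
  conv_lhs => rw [← Finset.univ_sum_single a]
  rw [map_sum]
  refine Finset.sum_congr rfl fun j _ => ?_
  rw [← smul_eq_mul, ← map_smul, ← Pi.single_smul, smul_eq_mul, mul_one]

theorem separatingLeft_map_ofReal_iff {ι : Type*} [Fintype ι] [DecidableEq ι] (S : Matrix ι ι ℝ) :
    (S.map ofReal).SeparatingLeft ↔ S.det ≠ 0 := by
  have hdet : (S.map ofReal).det = (S.det : ℂ) := (RingHom.map_det ofRealHom S).symm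
  rw [separatingLeft_iff_det_ne_zero, hdet, ofReal_ne_zero]

theorem gammaH_graph_nondegenerate_iff {n : ℕ} {A : Matrix (Fin n) (Fin n) ℂ} (hA : A.IsSymm) :
    (∀ a : Fin n → ℂ, (∀ b, gammaH n (a, a ᵥ* A) (b, b ᵥ* A) = 0) → a = 0) ↔
      (A.map im).det ≠ 0 := by
  rw [← separatingLeft_map_ofReal_iff, separatingLeft_def]
  simp only [gammaH_graph hA, mul_eq_zero, two_ne_zero, false_or]
  exact forall_congr' fun a => imp_congr_left ⟨fun h w => by simpa using h (star w), fun h _ => h _⟩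

/-- Let `F` be holomorphic on an open `U ⊂ ℂ^n` and `φ = dF : U → ℂ^{2n}`.
Then `φ` is Kählerian at `z ∈ U`, i.e. the pullback `φ*γ : (a,b) ↦ γ(dφ_z a, dφ_z b)`
of the Hermitian form `γ` is nondegenerate, if and only if `det (Im ∂²F)(z) ≠ 0`. -/
theorem stmt12 (n : ℕ) (U : Set (Fin n → ℂ)) (hU : IsOpen U)
    (F : (Fin n → ℂ) → ℂ) (hF : DifferentiableOn ℂ F U)
    (z : Fin n → ℂ) (hz : z ∈ U) :
    (∀ a : Fin n → ℂ, (∀ b : Fin n → ℂ, gammaH n (dphiF n F z a) (dphiF n F z b) = 0) → a = 0)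
      ↔ Matrix.det ((hessF n F z).map Complex.im) ≠ 0 := by
  have hsym : (hessF n F z).IsSymm :=
    Matrix.IsSymm.ext fun i j => hF.fderiv_fderiv_apply_comm hU hz _ _
  simp only [dphiF_eq_vecMul]
  exact gammaH_graph_nondegenerate_iff hsym
end
end
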